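/- Define f : [0,∞) → ℝ by f(t) = log t for t ≥ 1 and f(t) = t − 1 for t < 1. Then for any densities p, q on a set X with sup_x p(x)/q(x) ≤ V, it holds that E_{x∼p}[f(p(x)/q(x))] ≤ (4 + log V) · H²(p, q). -/

import Mathlib

/-- `f(t) = log t` for `t ≥ 1` and `f(t) = t − 1` for `t < 1`. -/
noncomputable def truncLog (t : ℝ) : ℝ := if 1 ≤ t then Real.log t else t - 1

/-!
Since `∑ p = ∑ q = 1`, the left side equals `∑ q φ(p/q)` with `φ(r) = r f(r) - r + 1`, and
`∑ q (√(p/q) - 1)² = H²(p, q)`. So it suffices to show `φ(r) ≤ (4 + log V) (√r - 1)²` on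
`[0, V]`. For `r ≥ 1` this follows from `log r ≤ 2 (√r - 1)`, which gives
`φ(r) ≤ (3 + log r) (√r - 1)²`; for `r < 1`, `φ(r) = (r - 1)² = (√r + 1)² (√r - 1)²`.
-/

open Real

lemma Real.log_le_two_mul_sqrt_sub_one {r : ℝ} (hr : 0 < r) : log r ≤ 2 * (√r - 1) := by
  have h := log_le_sub_one_of_pos (sqrt_pos.2 hr)
  rw [log_sqrt hr.le] at h
  linarith

lemma mul_log_sub_add_one_le {r : ℝ} (hr : 1 ≤ r) :
    r * log r - r + 1 ≤ (3 + log r) * (√r - 1) ^ 2 := by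
  have hsq : √r ^ 2 = r := sq_sqrt (by linarith)
  have hs : 1 ≤ √r := one_le_sqrt.2 hr
  have hlog := log_le_two_mul_sqrt_sub_one (by linarith : 0 < r)
  -- the difference of the two sides is `(2√r - 1) (log r - 2 (√r - 1))`
  nlinarith [mul_nonneg (sub_nonneg.2 hlog) (by linarith : (0 : ℝ) ≤ 2 * √r - 1)]

lemma sub_one_sq_le_four_mul_sqrt_sub_one_sq {r : ℝ} (hr0 : 0 ≤ r) (hr1 : r ≤ 1) :
    (r - 1) ^ 2 ≤ 4 * (√r - 1) ^ 2 := by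
  have hsq : √r ^ 2 = r := sq_sqrt hr0
  have hs : √r ≤ 1 := sqrt_le_one.2 hr1
  have hfactor : (r - 1) ^ 2 = (√r + 1) ^ 2 * (√r - 1) ^ 2 := by
    conv_lhs => rw [← hsq]
    ring
  rw [hfactor]
  gcongr
  nlinarith [sqrt_nonneg r]

lemma mul_truncLog_sub_add_one_le {r V : ℝ} (hr : 0 ≤ r) (hrV : r ≤ V) (hV : 1 ≤ V) :
    r * truncLog r - r + 1 ≤ (4 + log V) * (√r - 1) ^ 2 := by
  unfold truncLog
  split_ifs with h
  · calc r * log r - r + 1 ≤ (3 + log r) * (√r - 1) ^ 2 := mul_log_sub_add_one_le h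
      _ ≤ (4 + log V) * (√r - 1) ^ 2 := by gcongr; linarith [log_le_log (by linarith) hrV]
  · calc r * (r - 1) - r + 1 = (r - 1) ^ 2 := by ring
      _ ≤ 4 * (√r - 1) ^ 2 := sub_one_sq_le_four_mul_sqrt_sub_one_sq hr (by linarith)
      _ ≤ (4 + log V) * (√r - 1) ^ 2 := by gcongr; linarith [log_nonneg hV]

lemma mul_sqrt_div_sub_one_sq (p : ℝ) {q : ℝ} (hq : 0 < q) :
    q * (√(p / q) - 1) ^ 2 = (√p - √q) ^ 2 := by
  have hsq : √q ^ 2 = q := sq_sqrt hq.le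
  have hs : √q ≠ 0 := (sqrt_pos.2 hq).ne'
  rw [sqrt_div' p hq.le]
  nth_rw 1 [← hsq]
  field_simp

lemma mul_truncLog_div_le {p q V : ℝ} (hp : 0 ≤ p) (hq : 0 < q) (hpq : p / q ≤ V)
    (hV : 1 ≤ V) : p * truncLog (p / q) ≤ (4 + log V) * (√p - √q) ^ 2 + (p - q) := by
  have hr := mul_truncLog_sub_add_one_le (div_nonneg hp hq.le) hpq hV
  have hqr : q * (p / q) = p := mul_div_cancel₀ _ hq.ne'
  calc p * truncLog (p / q) = q * (p / q * truncLog (p / q) - p / q + 1) + (p - q) := by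
        rw [mul_add, mul_sub, ← mul_assoc, hqr]; ring
    _ ≤ q * ((4 + log V) * (√(p / q) - 1) ^ 2) + (p - q) := by gcongr
    _ = (4 + log V) * (√p - √q) ^ 2 + (p - q) := by
        rw [← mul_sqrt_div_sub_one_sq p hq]; ring

lemma one_le_of_sum_eq_one_of_div_le {X : Type*} [Fintype X] {p q : X → ℝ} {V : ℝ}
    (hq0 : ∀ x, 0 < q x) (hp1 : ∑ x, p x = 1) (hq1 : ∑ x, q x = 1)
    (hV : ∀ x, p x / q x ≤ V) : 1 ≤ V :=
  calc 1 = ∑ x, p x := hp1.symm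
    _ ≤ ∑ x, V * q x := Finset.sum_le_sum fun x _ => (div_le_iff₀ (hq0 x)).1 (hV x)
    _ = V := by rw [← Finset.mul_sum, hq1, mul_one]

theorem truncLog_div_le_hellinger {X : Type} [Fintype X] (p q : X → ℝ) (V : ℝ)
    (hp0 : ∀ x, 0 ≤ p x) (hq0 : ∀ x, 0 < q x)
    (hp1 : (∑ x, p x) = 1) (hq1 : (∑ x, q x) = 1)
    (hV : ∀ x, p x / q x ≤ V) :
    (∑ x, p x * truncLog (p x / q x)) ≤
      (4 + Real.log V) * ∑ x, (Real.sqrt (p x) - Real.sqrt (q x)) ^ 2 := by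
  have hV1 : 1 ≤ V := one_le_of_sum_eq_one_of_div_le hq0 hp1 hq1 hV
  calc ∑ x, p x * truncLog (p x / q x)
      ≤ ∑ x, ((4 + log V) * (√(p x) - √(q x)) ^ 2 + (p x - q x)) :=
        Finset.sum_le_sum fun x _ => mul_truncLog_div_le (hp0 x) (hq0 x) (hV x) hV1
    _ = (4 + log V) * ∑ x, (√(p x) - √(q x)) ^ 2 := by
        rw [Finset.sum_add_distrib, Finset.sum_sub_distrib, hp1, hq1, ← Finset.mul_sum]
        ring
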